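/- arXiv:1008.3748 — 4 statements merged into one kernel-verified Lean document; each statement's English description precedes it below -/
import Mathlib

section
/- Let Ω be a compact Hausdorff topological space. If every C*-subalgebra of C(Ω, ℂ) (i.e., every closed star-subalgebra of the C*-algebra of continuous complex-valued functions on Ω) has property (FS), then Ω is a scattered topological space. -/
/-- A topological space is scattered if every nonempty subset contains a point
isolated in the subspace topology. -/
def IsScatteredSpace (X : Type*) [TopologicalSpace X] : Prop :=
  ∀ S : Set X, S.Nonempty → ∃ x ∈ S, nhdsWithin x (S \ {x}) = ⊥

/-- Property (FS): self-adjoint elements with finite quasispectrum are dense in the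
set of self-adjoint elements. -/
def HasFS (B : Type*) [NonUnitalRing B] [Module ℂ B] [Star B] [TopologicalSpace B] : Prop :=
  ∀ x : B, IsSelfAdjoint x →
    x ∈ closure {y : B | IsSelfAdjoint y ∧ (quasispectrum ℂ y).Finite}

/-!
If `Ω` is not scattered, the closure of a nonempty dense-in-itself set is a nonempty perfect set,
which carries a binary Cantor scheme of closed sets. Summing, with weights `2⁻¹ ^ (n + 1)`, Urysohn
functions separating the two halves of the `n`-th level gives `F : C(Ω, ℝ)` whose range contains
`[0, 1]`: a point on the branch of a digit sequence `d` is sent to the binary number `0.d₀d₁d₂…`.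

The functions constant on the fibres of `F` form a closed star-subalgebra containing the
self-adjoint element `F`. An element of it with finite quasispectrum has finite range; being a
function of `F` with finitely many values over the connected set `[0, 1]`, it is constant on
`F ⁻¹' [0, 1]`, so it stays at distance at least `1 / 2` from `F`, which takes the values `0` and
`1` there.
-/

open Set

namespace CantorScheme

variable {α β : Type*} {A : List β → Set α}

theorem Disjoint.disjoint_of_length_eq (hA : CantorScheme.Disjoint A)
    (hanti : CantorScheme.Antitone A) :
    ∀ {l l' : List β}, l.length = l'.length → l ≠ l' → _root_.Disjoint (A l) (A l')
  | [], [], _, hne => absurd rfl hne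
  | a :: l, b :: l', hlen, hne => by
    by_cases hl : l = l'
    · subst hl
      exact hA l fun hab => hne (hab ▸ rfl)
    · exact (hA.disjoint_of_length_eq hanti (Nat.succ.inj hlen) hl).mono
        (hanti l a) (hanti l' b)

variable (A) in
def levelSet (b : β) (n : ℕ) : Set α :=
  ⋃ v : List.Vector β n, A (b :: v.toList)

theorem isClosed_levelSet [Finite β] [TopologicalSpace α] (hA : ∀ l, IsClosed (A l))
    (b : β) (n : ℕ) : IsClosed (levelSet A b n) :=
  isClosed_iUnion_of_finite fun _ => hA _

theorem Disjoint.disjoint_levelSet (hA : CantorScheme.Disjoint A)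
    (hanti : CantorScheme.Antitone A) {a b : β} (hab : a ≠ b) (n : ℕ) :
    _root_.Disjoint (levelSet A a n) (levelSet A b n) := by
  simp only [levelSet, disjoint_iUnion_left, disjoint_iUnion_right]
  intro v w
  exact hA.disjoint_of_length_eq hanti (by simp) fun h => hab (List.cons.inj h).1

theorem mem_levelSet_of_mem_res {σ : ℕ → β} {n : ℕ} {x : α}
    (hx : x ∈ A (PiNat.res σ (n + 1))) : x ∈ levelSet A (σ n) n :=
  mem_iUnion.2 ⟨⟨PiNat.res σ n, PiNat.res_length σ n⟩, hx⟩

theorem exists_forall_mem_res [TopologicalSpace α] [CompactSpace α] (hA : ∀ l, IsClosed (A l))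
    (hne : ∀ l, (A l).Nonempty) (hanti : CantorScheme.Antitone A) (σ : ℕ → β) :
    ∃ x, ∀ n, x ∈ A (PiNat.res σ n) := by
  obtain ⟨x, hx⟩ := IsCompact.nonempty_iInter_of_sequence_nonempty_isCompact_isClosed
    (fun n => A (PiNat.res σ n)) (fun n => hanti _ _) (fun n => hne _) (hA _).isCompact
    (fun n => hA _)
  exact ⟨x, mem_iInter.1 hx⟩

end CantorScheme

open CantorScheme in
theorem exists_continuous_Icc_subset_range_of_cantorScheme {α : Type*} [TopologicalSpace α]
    [CompactSpace α] [NormalSpace α] {A : List (Fin 2) → Set α} (hA : ∀ l, IsClosed (A l))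
    (hne : ∀ l, (A l).Nonempty) (hanti : CantorScheme.Antitone A)
    (hdisj : CantorScheme.Disjoint A) :
    ∃ F : C(α, ℝ), Icc 0 1 ⊆ range F := by
  choose g hg0 hg1 hg using fun n => exists_continuous_zero_one_of_isClosed
    (isClosed_levelSet hA 0 n) (isClosed_levelSet hA 1 n)
    (hdisj.disjoint_levelSet hanti zero_ne_one n)
  have hsum : Summable fun n : ℕ => ((2 : ℝ) ^ (n + 1))⁻¹ := by
    simpa [pow_succ, mul_comm] using summable_geometric_two.mul_left (2⁻¹ : ℝ)
  have hcont : Continuous fun x => ∑' n, g n x * ((2 : ℝ) ^ (n + 1))⁻¹ := by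
    refine continuous_tsum (fun n => by fun_prop) hsum fun n x => ?_
    rw [norm_mul, norm_inv, norm_pow, Real.norm_ofNat, Real.norm_of_nonneg (hg n x).1]
    exact mul_le_of_le_one_left (by positivity) (hg n x).2
  refine ⟨⟨_, hcont⟩, fun t ht => ?_⟩
  obtain ⟨d, -, rfl⟩ := Real.ofDigits_SurjOn (b := 2) one_lt_two ht
  obtain ⟨x, hx⟩ := exists_forall_mem_res hA hne hanti d
  have hgx (n : ℕ) : g n x = d n := by
    have hmem := mem_levelSet_of_mem_res (hx (n + 1))
    generalize d n = i at hmem ⊢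
    fin_cases i
    · simpa using hg0 n hmem
    · simpa using hg1 n hmem
  refine ⟨x, tsum_congr fun n => ?_⟩
  simp [hgx, Real.ofDigitsTerm]

theorem Perfect.exists_cantorScheme {α : Type*} [TopologicalSpace α] [T25Space α] {C : Set α}
    (hC : Perfect C) (hne : C.Nonempty) :
    ∃ A : List (Fin 2) → Set α, (∀ l, IsClosed (A l)) ∧ (∀ l, (A l).Nonempty) ∧
      CantorScheme.Antitone A ∧ CantorScheme.Disjoint A := by
  have split (D : {D : Set α // Perfect D ∧ D.Nonempty}) :
      ∃ E : Fin 2 → {D : Set α // Perfect D ∧ D.Nonempty},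
        (∀ i, (E i : Set α) ⊆ D) ∧ Disjoint (E 0 : Set α) (E 1) := by
    obtain ⟨C₀, C₁, ⟨h₀, hne₀, hsub₀⟩, ⟨h₁, hne₁, hsub₁⟩, hdisj⟩ := D.2.1.splitting D.2.2
    refine ⟨![⟨C₀, h₀, hne₀⟩, ⟨C₁, h₁, hne₁⟩], fun i => ?_, hdisj⟩
    fin_cases i
    exacts [hsub₀, hsub₁]
  choose E hE_sub hE_disj using split
  let Q (l : List (Fin 2)) : {D : Set α // Perfect D ∧ D.Nonempty} :=
    l.foldr (fun i D => E D i) ⟨C, hC, hne⟩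
  refine ⟨fun l => Q l, fun l => (Q l).2.1.closed, fun l => (Q l).2.2,
    fun l i => hE_sub (Q l) i, fun l i j hij => ?_⟩
  fin_cases i <;> fin_cases j
  · exact absurd rfl hij
  · exact hE_disj (Q l)
  · exact (hE_disj (Q l)).symm
  · exact absurd rfl hij

theorem exists_preperfect_of_not_isScatteredSpace {X : Type*} [TopologicalSpace X]
    (h : ¬ IsScatteredSpace X) : ∃ S : Set X, S.Nonempty ∧ Preperfect S := by
  simp only [IsScatteredSpace, not_forall, not_exists, not_and] at h
  obtain ⟨S, hS, hacc⟩ := h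
  exact ⟨S, hS, fun x hx => accPt_principal_iff_nhdsWithin.2 ⟨hacc x hx⟩⟩

theorem exists_continuous_Icc_subset_range_of_not_isScatteredSpace {X : Type*}
    [TopologicalSpace X] [CompactSpace X] [T2Space X] (h : ¬ IsScatteredSpace X) :
    ∃ F : C(X, ℝ), Icc 0 1 ⊆ range F := by
  obtain ⟨S, hSne, hS⟩ := exists_preperfect_of_not_isScatteredSpace h
  obtain ⟨A, hA, hne, hanti, hdisj⟩ := hS.perfect_closure.exists_cantorScheme hSne.closure
  exact exists_continuous_Icc_subset_range_of_cantorScheme hA hne hanti hdisj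

theorem IsPreconnected.apply_eq_of_finite_range_of_factors {Ω Y X : Type*} [TopologicalSpace Ω]
    [CompactSpace Ω] [TopologicalSpace Y] [T2Space Y] [TopologicalSpace X] [T1Space X]
    {I : Set Y} (hI : IsPreconnected I) {f : C(Ω, Y)} (hIf : I ⊆ range f) {g : C(Ω, X)}
    (hg : (range g).Finite) (hfg : ∀ x y, f x = f y → g x = g y) {x y : Ω} (hx : f x ∈ I)
    (hy : f y ∈ I) : g x = g y := by
  have hclosed (s : Set X) (hs : IsClosed (g ⁻¹' s)) : IsClosed (f '' (g ⁻¹' s)) :=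
    (hs.isCompact.image f.continuous).isClosed
  have hcompl : IsClosed (g ⁻¹' {g x}ᶜ) := by
    rw [← preimage_inter_range]
    exact ((hg.subset inter_subset_right).isClosed).preimage g.continuous
  have hcover : I ⊆ f '' (g ⁻¹' {g x}) ∪ f '' (g ⁻¹' {g x}ᶜ) := by
    rw [← image_union, ← preimage_union, union_compl_self, preimage_univ, image_univ]
    exact hIf
  have hdisj : I ∩ (f '' (g ⁻¹' {g x}) ∩ f '' (g ⁻¹' {g x}ᶜ)) = ∅ := by
    rw [eq_empty_iff_forall_notMem]
    rintro _ ⟨-, ⟨z, hz, rfl⟩, ⟨z', hz', hzz'⟩⟩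
    exact hz' (hfg z' z hzz' ▸ hz)
  rcases isPreconnected_iff_subset_of_disjoint_closed.1 hI _ _
    (hclosed _ (isClosed_singleton.preimage g.continuous)) (hclosed _ hcompl) hcover hdisj
    with hsub | hsub
  · obtain ⟨z, hz, hzy⟩ := hsub hy
    exact (hfg z y hzy ▸ hz : g y = g x).symm
  · obtain ⟨z, hz, hzx⟩ := hsub hx
    exact absurd (hfg z x hzx) hz

def fiberSubalgebra {Ω Y : Type*} [TopologicalSpace Ω] (f : Ω → Y) :
    NonUnitalStarSubalgebra ℂ C(Ω, ℂ) where
  carrier := {p | ∀ x y, f x = f y → p x = p y}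
  add_mem' hp hq x y h := by simp only [ContinuousMap.add_apply, hp x y h, hq x y h]
  zero_mem' _ _ _ := rfl
  mul_mem' hp hq x y h := by simp only [ContinuousMap.mul_apply, hp x y h, hq x y h]
  smul_mem' c _ hp x y h := by simp only [ContinuousMap.smul_apply, hp x y h]
  star_mem' hp x y h := by simp only [ContinuousMap.star_apply, hp x y h]

theorem isClosed_fiberSubalgebra {Ω Y : Type*} [TopologicalSpace Ω] (f : Ω → Y) :
    IsClosed (fiberSubalgebra f : Set C(Ω, ℂ)) := by
  show IsClosed {p : C(Ω, ℂ) | ∀ x y, f x = f y → p x = p y}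
  simp only [ofPred_forall]
  exact isClosed_iInter fun x => isClosed_iInter fun y => isClosed_iInter fun _ =>
    isClosed_eq (continuous_eval_const x) (continuous_eval_const y)

theorem HasFS.exists_finite_range_dist_lt {Ω : Type*} [TopologicalSpace Ω] [CompactSpace Ω]
    {B : NonUnitalStarSubalgebra ℂ C(Ω, ℂ)} (hB : HasFS B) {f : C(Ω, ℂ)} (hfB : f ∈ B)
    (hf : IsSelfAdjoint f) {ε : ℝ} (hε : 0 < ε) :
    ∃ g ∈ B, (range g).Finite ∧ dist f g < ε := by
  obtain ⟨g, ⟨-, hg⟩, hdist⟩ :=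
    Metric.mem_closure_iff.1 (hB ⟨f, hfB⟩ (Subtype.ext hf)) ε hε
  refine ⟨g, g.2, hg.subset ?_, hdist⟩
  rw [← ContinuousMap.spectrum_eq_range]
  exact (spectrum_subset_quasispectrum ℂ _).trans
    (NonUnitalAlgHom.quasispectrum_apply_subset (NonUnitalStarSubalgebraClass.subtype B) g)

theorem not_hasFS_fiberSubalgebra {Ω : Type*} [TopologicalSpace Ω] [CompactSpace Ω]
    {F : C(Ω, ℝ)} (hF : Icc 0 1 ⊆ range F) : ¬ HasFS (fiberSubalgebra F) := by
  intro hFS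
  let f : C(Ω, ℂ) := ⟨fun x => (F x : ℂ), by fun_prop⟩
  have hfB : f ∈ fiberSubalgebra F := fun x y h => by simp [f, h]
  have hf : IsSelfAdjoint f := by ext; simp [f]
  obtain ⟨g, hgB, hg, hdist⟩ := hFS.exists_finite_range_dist_lt hfB hf one_half_pos
  have h0 : (0 : ℝ) ∈ Icc 0 1 := left_mem_Icc.2 zero_le_one
  have h1 : (1 : ℝ) ∈ Icc 0 1 := right_mem_Icc.2 zero_le_one
  obtain ⟨x₀, hx₀⟩ := hF h0
  obtain ⟨x₁, hx₁⟩ := hF h1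
  have hg₀₁ : g x₀ = g x₁ := isPreconnected_Icc.apply_eq_of_finite_range_of_factors hF hg hgB
    (by rwa [hx₀]) (by rwa [hx₁])
  have h₀ : dist (f x₀) (g x₀) < 1 / 2 := (ContinuousMap.dist_apply_le_dist x₀).trans_lt hdist
  have h₁ : dist (f x₁) (g x₀) < 1 / 2 :=
    hg₀₁ ▸ (ContinuousMap.dist_apply_le_dist x₁).trans_lt hdist
  have : (1 : ℝ) < 1 := calc
    1 = dist (f x₀) (f x₁) := by simp [f, hx₀, hx₁]
    _ ≤ dist (f x₀) (g x₀) + dist (f x₁) (g x₀) := dist_triangle_right _ _ _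
    _ < 1 / 2 + 1 / 2 := add_lt_add h₀ h₁
    _ = 1 := by norm_num
  exact lt_irrefl _ this

theorem stmt_0 (Ω : Type*) [TopologicalSpace Ω] [CompactSpace Ω] [T2Space Ω]
    (h : ∀ B : NonUnitalStarSubalgebra ℂ C(Ω, ℂ), IsClosed (B : Set C(Ω, ℂ)) → HasFS B) :
    IsScatteredSpace Ω := by
  by_contra hns
  obtain ⟨F, hF⟩ := exists_continuous_Icc_subset_range_of_not_isScatteredSpace hns
  exact not_hasFS_fiberSubalgebra hF (h _ (isClosed_fiberSubalgebra F))
end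

section
/- Let Ω be a compact Hausdorff topological space. If Ω is a scattered topological space, then the C*-algebra C(Ω, ℂ) has property (FS), i.e., the set of self-adjoint elements with finite spectrum is dense in the set of all self-adjoint elements of C(Ω, ℂ). -/
open Set Topology

theorem IsScatteredSpace.totallyDisconnectedSpace {X : Type*} [TopologicalSpace X] [T1Space X]
    (h : IsScatteredSpace X) : TotallyDisconnectedSpace X := by
  refine ⟨fun t _ ht => ?_⟩
  by_contra hnt
  rw [not_subsingleton_iff] at hnt
  obtain ⟨x, hx, hiso⟩ := h t hnt.nonempty
  obtain ⟨y, hy, hyx⟩ := hnt.exists_ne x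
  obtain ⟨U, hU, hxU, hUt⟩ := mem_nhdsWithin.1 (hiso ▸ Filter.mem_bot : ∅ ∈ 𝓝[t \ {x}] x)
  have hcover : t ⊆ U ∪ {x}ᶜ := by
    rintro z -
    rcases eq_or_ne z x with rfl | hzx
    exacts [Or.inl hxU, Or.inr hzx]
  obtain ⟨z, hzt, hzU, hzx⟩ :=
    ht U {x}ᶜ hU isOpen_compl_singleton hcover ⟨x, hx, hxU⟩ ⟨y, hy, hyx⟩
  exact hUt ⟨hzU, hzt, hzx⟩

namespace ContinuousMap

theorem exists_finite_range_dist_lt {X V : Type*} [TopologicalSpace X] [CompactSpace X]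
    [T2Space X] [TotallyDisconnectedSpace X] [PseudoMetricSpace V]
    (f : C(X, V)) {ε : ℝ} (hε : 0 < ε) :
    ∃ g : C(X, V), (range g).Finite ∧ dist f g < ε := by
  obtain ⟨n, p, v, hp, hpv⟩ := f.exists_finite_approximation_of_mem_nhds_diagonal
    (nhdsSet_diagonal_le_uniformity (Metric.dist_mem_uniformity hε))
  refine ⟨⟨v ∘ p, continuous_of_discreteTopology.comp hp⟩, ?_, (dist_lt_iff hε).2 hpv⟩
  exact (finite_range v).subset (range_comp_subset_range p v)

variable {X : Type*} [TopologicalSpace X]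

def ofReal (u : C(X, ℝ)) : C(X, ℂ) := ⟨fun x => u x, by fun_prop⟩

@[simp]
theorem ofReal_apply (u : C(X, ℝ)) (x : X) : ofReal u x = u x := rfl

theorem isSelfAdjoint_ofReal (u : C(X, ℝ)) : IsSelfAdjoint (ofReal u) := by
  ext x
  exact Complex.conj_ofReal _

theorem spectrum_ofReal (u : C(X, ℝ)) : spectrum ℂ (ofReal u) = (↑) '' range u := by
  rw [spectrum_eq_range, ← range_comp]
  rfl

theorem dist_ofReal [CompactSpace X] (u v : C(X, ℝ)) : dist (ofReal u) (ofReal v) = dist u v := by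
  simp [dist_eq_iSup, Complex.isometry_ofReal.dist_eq]

theorem exists_ofReal_eq_of_isSelfAdjoint {f : C(X, ℂ)} (hf : IsSelfAdjoint f) :
    ∃ u : C(X, ℝ), ofReal u = f := by
  refine ⟨⟨fun x => (f x).re, by fun_prop⟩, ext fun x => ?_⟩
  exact Complex.conj_eq_iff_re.1 (congrFun (congrArg DFunLike.coe hf) x)

end ContinuousMap

theorem stmt_1 (Ω : Type*) [TopologicalSpace Ω] [CompactSpace Ω] [T2Space Ω]
    (h : IsScatteredSpace Ω) :
    ∀ f : C(Ω, ℂ), IsSelfAdjoint f →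
      f ∈ closure {g : C(Ω, ℂ) | IsSelfAdjoint g ∧ (spectrum ℂ g).Finite} := by
  have := h.totallyDisconnectedSpace
  intro f hf
  obtain ⟨u, rfl⟩ := ContinuousMap.exists_ofReal_eq_of_isSelfAdjoint hf
  refine Metric.mem_closure_iff.2 fun ε hε => ?_
  obtain ⟨v, hv, huv⟩ := u.exists_finite_range_dist_lt hε
  refine ⟨.ofReal v, ⟨ContinuousMap.isSelfAdjoint_ofReal v, ?_⟩, ?_⟩
  · rw [ContinuousMap.spectrum_ofReal]
    exact hv.image _
  · rwa [ContinuousMap.dist_ofReal]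
end

section
/- Let A be a (not necessarily unital) C*-algebra. Then A is scattered if and only if every separable commutative C*-subalgebra of A (i.e., every separable commutative closed star-subalgebra of A) has property (FS) (equivalently, has real rank zero). -/
/-- A (not necessarily unital) C*-algebra is scattered if every self-adjoint element
has countable quasispectrum (Huruya's characterization). -/
def IsScatteredCStarAlgebra (B : Type*) [NonUnitalRing B] [Module ℂ B] [Star B] : Prop :=
  ∀ x : B, IsSelfAdjoint x → (quasispectrum ℂ x).Countable

/-!
If every self-adjoint `x` has countable spectrum `K`, then for a generic shift `θ` no point of `K`
sits at a jump of the step function `t ↦ δ (⌊t / δ + θ⌋ - ⌊θ⌋)`, which is therefore continuous on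
`K`, has finitely many values there and is `δ`-close to the identity; applying it to `x` gives the
finite-spectrum approximants. Spectral permanence (through the unitizations) transfers this to
closed subalgebras.

Conversely, an uncountable closed `K ⊆ ℝ` contains a Cantor set, which maps continuously onto
`[0, 1]`; extending by Tietze gives `f` with `f(K) ⊇ [a, a + 1]`. In the separable commutative
algebra `C*(f(x)) ≅ C₀(σ(f(x)))`, an element with finite spectrum is a function with finite range,
hence constant on the interval `[a, a + 1]`, so it stays at distance `≥ 1/2` from `f(x)`.
-/

open Set Unitization
open scoped ContinuousMapZero

theorem continuousAt_floor {α : Type*} [Ring α] [LinearOrder α] [IsStrictOrderedRing α]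
    [FloorRing α] [TopologicalSpace α] [OrderTopology α] {x : α} (h : x ≠ ⌊x⌋) :
    ContinuousAt (fun x => (⌊x⌋ : α)) x :=
  (continuousOn_floor ⌊x⌋).continuousAt <|
    Ico_mem_nhds ((Int.floor_le x).lt_of_ne h.symm) (Int.lt_floor_add_one x)

lemma exists_continuousOn_finite_image_approx_id {K : Set ℝ} (hK : IsCompact K)
    (hKc : K.Countable) {δ : ℝ} (hδ : 0 < δ) :
    ∃ f : ℝ → ℝ, ContinuousOn f K ∧ f 0 = 0 ∧ (f '' K).Finite ∧ ∀ t ∈ K, |f t - t| < δ := by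
  obtain ⟨θ, hθ⟩ : ∃ θ : ℝ, θ ∉ image2 (fun (k : ℤ) t => k - t / δ) univ K :=
    ((countable_univ.image2 hKc _).dense_compl ℝ).nonempty
  have hnotint : ∀ t ∈ K, t / δ + θ ≠ ⌊t / δ + θ⌋ := fun t ht h =>
    hθ ⟨⌊t / δ + θ⌋, mem_univ _, t, ht, by simp only [← h]; ring⟩
  obtain ⟨m, hm⟩ := hK.bddBelow
  obtain ⟨M, hM⟩ := hK.bddAbove
  refine ⟨fun t => δ * (⌊t / δ + θ⌋ - ⌊θ⌋), fun t ht => ?_, by simp, ?_, fun t _ => ?_⟩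
  · have hfloor : ContinuousAt (fun s : ℝ => (⌊s / δ + θ⌋ : ℝ)) t :=
      (continuousAt_floor (hnotint t ht)).comp (f := fun s : ℝ => s / δ + θ) (by fun_prop)
    exact ((hfloor.sub continuousAt_const).const_mul δ).continuousWithinAt
  · refine ((finite_Icc ⌊m / δ + θ⌋ ⌊M / δ + θ⌋).image fun n : ℤ => δ * (n - ⌊θ⌋)).subset ?_
    rintro - ⟨t, ht, rfl⟩
    refine ⟨⌊t / δ + θ⌋, ⟨?_, ?_⟩, rfl⟩ <;> gcongr
    exacts [hm ht, hM ht]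
  · have h1 := Int.fract_nonneg (t / δ + θ)
    have h2 := Int.fract_lt_one (t / δ + θ)
    have h3 := Int.fract_nonneg θ
    have h4 := Int.fract_lt_one θ
    have : δ * (⌊t / δ + θ⌋ - ⌊θ⌋) - t = δ * (Int.fract θ - Int.fract (t / δ + θ)) := by
      unfold Int.fract; field_simp; ring
    rw [this, abs_mul, abs_of_pos hδ]
    exact mul_lt_of_lt_one_right hδ (abs_sub_lt_iff.mpr ⟨by linarith, by linarith⟩)

lemma exists_continuous_Icc_subset_image_of_not_countable {K : Set ℝ} (hK : IsClosed K)
    (hKc : ¬ K.Countable) :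
    ∃ f : ℝ → ℝ, Continuous f ∧ f 0 = 0 ∧ ∃ a, Icc a (a + 1) ⊆ f '' K := by
  obtain ⟨g, hgK, hg, hg_inj⟩ := hK.exists_nat_bool_injection_of_not_countable hKc
  obtain ⟨c, hc, hc_surj⟩ := exists_nat_bool_continuous_surjective_of_compact unitInterval
  have hemb := hg.isClosedEmbedding hg_inj
  let e := hemb.toHomeomorph
  let F : C(range g, ℝ) := ⟨fun x => c (e.symm x), by fun_prop⟩
  obtain ⟨q, hq⟩ := F.exists_restrict_eq hemb.isClosed_range
  refine ⟨fun t => q t - q 0, by fun_prop, sub_self _, -q 0, fun r hr => ?_⟩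
  obtain ⟨s, hs⟩ := hc_surj ⟨r + q 0, by constructor <;> linarith [hr.1, hr.2]⟩
  refine ⟨g s, hgK (mem_range_self s), ?_⟩
  have : q (g s) = c s := by
    rw [← ContinuousMap.restrict_apply_mk q _ _ (mem_range_self s), hq]
    simp [F, e]
  simp [this, hs]

lemma ContinuousMap.exists_le_norm_sub_of_finite_range {S : Set ℂ} {a b : ℝ} (hab : a ≤ b)
    (hS : ∀ r ∈ Icc a b, (r : ℂ) ∈ S) (g : C(S, ℂ)) (hg : (range g).Finite) :
    ∃ s : S, (b - a) / 2 ≤ ‖g s - s‖ := by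
  let ι : Icc a b → S := fun r => ⟨r, hS r r.2⟩
  have : PreconnectedSpace (Icc a b) := isPreconnected_iff_preconnectedSpace.mp isPreconnected_Icc
  have hconst : g (ι ⟨a, left_mem_Icc.mpr hab⟩) = g (ι ⟨b, right_mem_Icc.mpr hab⟩) :=
    isPreconnected_univ.constant_of_mapsTo hg.isDiscrete (by fun_prop)
      (fun _ _ => mem_range_self _) trivial trivial
  by_contra! h
  have ha := h (ι ⟨a, left_mem_Icc.mpr hab⟩)
  have hb := h (ι ⟨b, right_mem_Icc.mpr hab⟩)
  rw [← hconst] at hb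
  have := norm_sub_le_norm_sub_add_norm_sub (b : ℂ) (g (ι ⟨a, left_mem_Icc.mpr hab⟩)) a
  rw [← Complex.ofReal_sub, Complex.norm_real, Real.norm_of_nonneg (sub_nonneg.mpr hab),
    norm_sub_rev] at this
  simp only [ι] at ha hb
  linarith

namespace NonUnitalStarSubalgebra

variable {A : Type*} [NonUnitalCStarAlgebra A] (S : NonUnitalStarSubalgebra ℂ A)

lemma mem_range_starMap_subtype_iff (u : Unitization ℂ A) :
    u ∈ (starMap (NonUnitalStarSubalgebraClass.subtype S)).range ↔ u.snd ∈ S := by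
  constructor
  · rintro ⟨v, rfl⟩
    simp [algebraMap_eq_inl]
  · intro hu
    exact ⟨inl u.fst + inr ⟨u.snd, hu⟩, by ext <;> simp [algebraMap_eq_inl]⟩

lemma isClosed_range_starMap_subtype [hS : IsClosed (S : Set A)] :
    IsClosed (X := Unitization ℂ A) (starMap (NonUnitalStarSubalgebraClass.subtype S)).range := by
  rw [show ((starMap (NonUnitalStarSubalgebraClass.subtype S)).range : Set (Unitization ℂ A)) =
    (fun u => u.snd) ⁻¹' S from Set.ext (mem_range_starMap_subtype_iff S)]
  exact hS.preimage (continuous_snd.comp (uniformEquivProd (𝕜 := ℂ) (A := A)).continuous)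

lemma quasispectrum_eq [IsClosed (S : Set A)] (x : S) :
    quasispectrum ℂ x = quasispectrum ℂ (x : A) := by
  let ψ := starMap (NonUnitalStarSubalgebraClass.subtype S)
  have := isClosed_range_starMap_subtype S
  let e := StarAlgEquiv.ofInjective ψ (starMap_injective Subtype.val_injective)
  rw [quasispectrum_eq_spectrum_inr' ℂ ℂ, quasispectrum_eq_spectrum_inr' ℂ ℂ,
    ← AlgEquiv.spectrum_eq e, StarSubalgebra.spectrum_eq ψ.range]
  exact congrArg _ (starMap_inr _ x)

end NonUnitalStarSubalgebra

section CStarAlgebra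

variable {A : Type*} [NonUnitalCStarAlgebra A]

lemma IsSelfAdjoint.countable_quasispectrum_real_iff {a : A} (ha : IsSelfAdjoint a) :
    (quasispectrum ℝ a).Countable ↔ (quasispectrum ℂ a).Countable := by
  rw [← ha.quasispectrumRestricts.algebraMap_image]
  exact ⟨(·.image _), countable_of_injective_of_countable_image (algebraMap ℝ ℂ).injective.injOn⟩

lemma IsSelfAdjoint.finite_quasispectrum_real_iff {a : A} (ha : IsSelfAdjoint a) :
    (quasispectrum ℝ a).Finite ↔ (quasispectrum ℂ a).Finite := by
  rw [← ha.quasispectrumRestricts.algebraMap_image,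
    finite_image_iff (algebraMap ℝ ℂ).injective.injOn]

lemma IsSelfAdjoint.mem_closure_setOf_finite_quasispectrum {x : A} (hx : IsSelfAdjoint x)
    (hct : (quasispectrum ℂ x).Countable) :
    x ∈ closure {y : A | IsSelfAdjoint y ∧ (quasispectrum ℂ y).Finite} := by
  refine Metric.mem_closure_iff.mpr fun ε hε => ?_
  obtain ⟨f, hf, hf0, hfin, happrox⟩ := exists_continuousOn_finite_image_approx_id
    (quasispectrum.isCompact x) (hx.countable_quasispectrum_real_iff.mpr hct) (half_pos hε)
  have hy : IsSelfAdjoint (cfcₙ f x) := cfcₙ_predicate f x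
  refine ⟨cfcₙ f x, ⟨hy, ?_⟩, ?_⟩
  · rwa [← hy.finite_quasispectrum_real_iff, cfcₙ_map_quasispectrum f x]
  · calc dist x (cfcₙ f x) = ‖cfcₙ (fun t => f t - t) x‖ := by
          rw [dist_eq_norm', cfcₙ_sub f (fun t => t) x, cfcₙ_id' ℝ x]
      _ ≤ ε / 2 := norm_cfcₙ_le fun t ht => (happrox t ht).le
      _ < ε := half_lt_self hε

lemma IsScatteredCStarAlgebra.hasFS (h : IsScatteredCStarAlgebra A) : HasFS A :=
  fun x hx => hx.mem_closure_setOf_finite_quasispectrum (h x hx)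

lemma IsScatteredCStarAlgebra.subalgebra (h : IsScatteredCStarAlgebra A)
    (S : NonUnitalStarSubalgebra ℂ A) [IsClosed (S : Set A)] : IsScatteredCStarAlgebra S :=
  fun x hx => S.quasispectrum_eq x ▸ h x (hx.map (NonUnitalStarSubalgebraClass.subtype S))

lemma IsStarNormal.le_norm_cfcₙHom_sub_self {y : A} (hy : IsStarNormal y) {a b : ℝ} (hab : a ≤ b)
    (hIcc : ∀ r ∈ Icc a b, (r : ℂ) ∈ quasispectrum ℂ y) (g : C(quasispectrum ℂ y, ℂ)₀)
    (hg : (quasispectrum ℂ (cfcₙHom hy g)).Finite) :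
    (b - a) / 2 ≤ ‖cfcₙHom hy g - y‖ := by
  rw [cfcₙHom_map_quasispectrum] at hg
  obtain ⟨s, hs⟩ := ContinuousMap.exists_le_norm_sub_of_finite_range hab hIcc g hg
  calc (b - a) / 2 ≤ ‖(g - .id (quasispectrum ℂ y) : C(quasispectrum ℂ y, ℂ)₀) s‖ := hs
    _ ≤ ‖g - .id (quasispectrum ℂ y)‖ := ContinuousMap.norm_coe_le_norm _ s
    _ = ‖cfcₙHom hy g - y‖ := by rw [← norm_cfcₙHom y, map_sub, cfcₙHom_id]

lemma isClosed_range_cfcₙHom {y : A} (hy : IsStarNormal y) :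
    IsClosed (NonUnitalStarAlgHom.range (cfcₙHom (R := ℂ) hy) : Set A) :=
  (isometry_cfcₙHom y).isClosedEmbedding.isClosed_range

lemma separableSpace_range_cfcₙHom {y : A} (hy : IsStarNormal y) :
    TopologicalSpace.SeparableSpace (NonUnitalStarAlgHom.range (cfcₙHom (R := ℂ) hy)) := by
  have : SecondCountableTopology C(quasispectrum ℂ y, ℂ)₀ :=
    ContinuousMapZero.isEmbedding_toContinuousMap.secondCountableTopology
  exact (TopologicalSpace.isSeparable_range (cfcₙHom_continuous hy)).separableSpace

lemma range_cfcₙHom_mul_comm {y : A} (hy : IsStarNormal y)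
    (z w : NonUnitalStarAlgHom.range (cfcₙHom (R := ℂ) hy)) : z * w = w * z := by
  obtain ⟨_, f, rfl⟩ := z
  obtain ⟨_, g, rfl⟩ := w
  exact Subtype.ext <| by simp only [NonUnitalStarSubalgebra.coe_mul, ← map_mul, mul_comm]

lemma IsSelfAdjoint.not_hasFS_range_cfcₙHom {y : A} (hy : IsSelfAdjoint y) {a b : ℝ}
    (hab : a < b) (hIcc : ∀ r ∈ Icc a b, (r : ℂ) ∈ quasispectrum ℂ y) :
    ¬ HasFS (NonUnitalStarAlgHom.range (cfcₙHom (R := ℂ) hy.isStarNormal)) := by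
  set B := NonUnitalStarAlgHom.range (cfcₙHom (R := ℂ) hy.isStarNormal)
  have : IsClosed (B : Set A) := isClosed_range_cfcₙHom hy.isStarNormal
  intro hFS
  let yB : B := ⟨y, _, cfcₙHom_id hy.isStarNormal⟩
  obtain ⟨z, ⟨-, hz⟩, hdist⟩ :=
    Metric.mem_closure_iff.mp (hFS yB (Subtype.ext hy)) ((b - a) / 2) (by linarith)
  obtain ⟨g, hg⟩ : ∃ g, cfcₙHom hy.isStarNormal g = z := z.2
  rw [B.quasispectrum_eq, ← hg] at hz
  have := hy.isStarNormal.le_norm_cfcₙHom_sub_self hab.le hIcc g hz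
  rw [hg, ← dist_eq_norm, dist_comm] at this
  exact this.not_gt hdist

lemma IsScatteredCStarAlgebra.of_forall_hasFS
    (h : ∀ B : NonUnitalStarSubalgebra ℂ A, IsClosed (B : Set A) →
      TopologicalSpace.SeparableSpace B → (∀ x y : B, x * y = y * x) → HasFS B) :
    IsScatteredCStarAlgebra A := by
  intro x hx
  by_contra hx_unc
  obtain ⟨f, hf, hf0, a, hIcc⟩ := exists_continuous_Icc_subset_image_of_not_countable
    (quasispectrum.isCompact x).isClosed (mt hx.countable_quasispectrum_real_iff.mp hx_unc)
  have hy : IsSelfAdjoint (cfcₙ f x) := cfcₙ_predicate f x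
  have hIcc_y : ∀ r ∈ Icc a (a + 1), (r : ℂ) ∈ quasispectrum ℂ (cfcₙ f x) := fun r hr => by
    rw [← hy.quasispectrumRestricts.algebraMap_image, cfcₙ_map_quasispectrum f x]
    exact mem_image_of_mem _ (hIcc hr)
  exact hy.not_hasFS_range_cfcₙHom (lt_add_one a) hIcc_y <| h _
    (isClosed_range_cfcₙHom _) (separableSpace_range_cfcₙHom _) (range_cfcₙHom_mul_comm _)

end CStarAlgebra

theorem stmt_7 (A : Type*) [NonUnitalNormedRing A] [StarRing A] [CStarRing A]
    [NormedSpace ℂ A] [IsScalarTower ℂ A A] [SMulCommClass ℂ A A] [StarModule ℂ A]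
    [CompleteSpace A] :
    IsScatteredCStarAlgebra A ↔
      ∀ B : NonUnitalStarSubalgebra ℂ A, IsClosed (B : Set A) →
        TopologicalSpace.SeparableSpace B → (∀ x y : B, x * y = y * x) → HasFS B := by
  let _ : NonUnitalCStarAlgebra A := {}
  refine ⟨fun h B hB _ _ => ?_, IsScatteredCStarAlgebra.of_forall_hasFS⟩
  have : IsClosed (B : Set A) := hB
  exact (h.subalgebra B).hasFS
end

section
/- Let Ω be a compact Hausdorff topological space. Then Ω is a scattered topological space if and only if every self-adjoint element of the C*-algebra C(Ω, ℂ) has countable spectrum. -/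
/-!
A space is scattered exactly when it has no nonempty perfect subset. If a compact space is scattered,
a continuous map `g` into a second countable Hausdorff space has countable range: otherwise the
range contains a nonempty perfect set `P`, and a closed set `C` minimal (Zorn, using compactness)
among those with `P ⊆ g '' C` is itself perfect, because removing an isolated point of `C` would
remove from `g '' C` only one point, which cannot be isolated in `P`. Conversely, a nonempty perfect
set in a compact Hausdorff space carries a Cantor scheme of nonempty perfect sets; Urysohn
functions separating the two halves of each level add up to a real function
`∑ 3⁻ⁿ gₙ` which takes every value of the Cantor function, so its range is uncountable. In
`C(Ω, ℂ)` the spectrum of `f` is its range, and real-valued functions are self-adjoint.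
-/

open Set Filter Topology PiNat

section

variable {X Y : Type*} [TopologicalSpace X] [TopologicalSpace Y]

theorem isScatteredSpace_iff_not_exists_perfect_nonempty :
    IsScatteredSpace X ↔ ¬ ∃ C : Set X, Perfect C ∧ C.Nonempty := by
  constructor
  · rintro hX ⟨C, hC, hne⟩
    obtain ⟨x, hxC, hx⟩ := hX C hne
    exact (accPt_principal_iff_nhdsWithin.mp (hC.acc x hxC)).ne hx
  · intro h S hne
    by_contra! hS
    have hpre : Preperfect S := fun x hx => accPt_principal_iff_nhdsWithin.mpr (hS x hx)
    exact h ⟨closure S, hpre.perfect_closure, hne.closure⟩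

theorem IsClosed.diff_singleton_of_not_accPt {C : Set X} {x : X} (hC : IsClosed C)
    (hx : ¬ AccPt x (𝓟 C)) : IsClosed (C \ {x}) := by
  refine closure_subset_iff_isClosed.mp fun y hy => ⟨?_, ?_⟩
  · exact hC.closure_subset (closure_mono sdiff_subset hy)
  · rintro rfl
    exact hx (accPt_principal_iff_nhdsWithin.mpr (mem_closure_iff_nhdsWithin_neBot.mp hy))

theorem mem_image_sInter_of_isChain [CompactSpace X] [T1Space Y] {g : X → Y} (hg : Continuous g)
    {c : Set (Set X)} (hc : IsChain (· ⊆ ·) c) (hne : c.Nonempty) (hcl : ∀ C ∈ c, IsClosed C)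
    {y : Y} (hy : ∀ C ∈ c, y ∈ g '' C) : y ∈ g '' ⋂₀ c := by
  have : Nonempty c := hne.to_subtype
  obtain ⟨x, hx⟩ := IsCompact.nonempty_iInter_of_directed_nonempty_isCompact_isClosed
    (fun C : c => C.1 ∩ g ⁻¹' {y})
    (fun C C' => (hc.total C.2 C'.2).elim
      (fun h => ⟨C, Subset.rfl, inter_subset_inter_left _ h⟩)
      (fun h => ⟨C', inter_subset_inter_left _ h, Subset.rfl⟩))
    (fun C => hy C C.2) (fun C => ((hcl C C.2).inter (isClosed_singleton.preimage hg)).isCompact)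
    (fun C => (hcl C C.2).inter (isClosed_singleton.preimage hg))
  simp only [mem_iInter, mem_inter_iff, mem_preimage, mem_singleton_iff] at hx
  exact ⟨x, mem_sInter.mpr fun C hC => (hx ⟨C, hC⟩).1, (hx ⟨_, hne.some_mem⟩).2⟩

theorem exists_minimal_isClosed_subset_image [CompactSpace X] [T1Space Y] {g : X → Y}
    (hg : Continuous g) {P : Set Y} (hP : P ⊆ range g) :
    ∃ C, Minimal (fun C : Set X => IsClosed C ∧ P ⊆ g '' C) C := by
  refine zorn_superset _ fun c hcS hc => ⟨⋂₀ c, ⟨isClosed_sInter fun C hC => (hcS hC).1, ?_⟩,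
    fun _ => sInter_subset_of_mem⟩
  rcases c.eq_empty_or_nonempty with rfl | hne
  · simpa using hP
  · exact fun y hy => mem_image_sInter_of_isChain hg hc hne (fun C hC => (hcS hC).1)
      fun C hC => (hcS hC).2 hy

theorem Preperfect.of_minimal_isClosed_subset_image [CompactSpace X] [T2Space Y] {g : X → Y}
    (hg : Continuous g) {P : Set Y} (hP : Preperfect P) {C : Set X}
    (hC : Minimal (fun C : Set X => IsClosed C ∧ P ⊆ g '' C) C) : Preperfect C := by
  intro x hxC
  by_contra hx
  have hC' : IsClosed (C \ {x}) := hC.prop.1.diff_singleton_of_not_accPt hx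
  obtain ⟨p, hpP, hp⟩ : ∃ p ∈ P, p ∉ g '' (C \ {x}) :=
    not_subset.mp fun h => (hC.eq_of_subset ⟨hC', h⟩ sdiff_subset ▸ hxC).2 rfl
  have himage : g '' C = insert (g x) (g '' (C \ {x})) := by
    rw [← image_insert_eq, insert_sdiff_singleton, insert_eq_of_mem hxC]
  have eq_of_notMem : ∀ q ∈ P, q ∉ g '' (C \ {x}) → q = g x := fun q hq hq' =>
    ((himage ▸ hC.prop.2 hq).resolve_right hq')
  have hU : (g '' (C \ {x}))ᶜ ∈ 𝓝 p :=
    ((hC'.isCompact.image hg).isClosed.isOpen_compl).mem_nhds hp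
  obtain ⟨q, ⟨hqU, hqP⟩, hqp⟩ := preperfect_iff_nhds.mp hP p hpP _ hU
  exact hqp ((eq_of_notMem q hqP hqU).trans (eq_of_notMem p hpP hp).symm)

theorem IsScatteredSpace.countable_range [CompactSpace X] [T2Space Y] [SecondCountableTopology Y]
    (hX : IsScatteredSpace X) {g : X → Y} (hg : Continuous g) : (range g).Countable := by
  by_contra hunc
  obtain ⟨P, hP, ⟨p, hp⟩, hPg⟩ :=
    exists_perfect_nonempty_of_isClosed_of_not_countable (isCompact_range hg).isClosed hunc
  obtain ⟨C, hC⟩ := exists_minimal_isClosed_subset_image hg hPg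
  obtain ⟨x, hx, -⟩ := hC.prop.2 hp
  exact isScatteredSpace_iff_not_exists_perfect_nonempty.mp hX
    ⟨C, ⟨hC.prop.1, hP.acc.of_minimal_isClosed_subset_image hg hC⟩, x, hx⟩

theorem Perfect.exists_cantorScheme_s10 [T25Space X] {K : Set X} (hK : Perfect K) (hne : K.Nonempty) :
    ∃ A : List Bool → Set X, (∀ l, Perfect (A l) ∧ (A l).Nonempty) ∧
      CantorScheme.Antitone A ∧ CantorScheme.Disjoint A := by
  let PerfectNonempty := {C : Set X // Perfect C ∧ C.Nonempty}
  choose C₀ C₁ hC₀ hC₁ hdisj using fun C : PerfectNonempty => C.2.1.splitting C.2.2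
  let child (C : PerfectNonempty) (b : Bool) : PerfectNonempty :=
    cond b ⟨C₁ C, (hC₁ C).1, (hC₁ C).2.1⟩ ⟨C₀ C, (hC₀ C).1, (hC₀ C).2.1⟩
  let A (l : List Bool) : PerfectNonempty := l.foldr (fun b C => child C b) ⟨K, hK, hne⟩
  refine ⟨fun l => A l, fun l => (A l).2, fun l b => ?_, fun l b b' hbb' => ?_⟩
  · cases b
    · exact (hC₀ (A l)).2.2
    · exact (hC₁ (A l)).2.2
  · cases b <;> cases b'
    · exact absurd rfl hbb'
    · exact hdisj (A l)
    · exact (hdisj (A l)).symm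
    · exact absurd rfl hbb'

theorem CantorScheme.Disjoint.disjoint_of_length_eq_s10 {β α : Type*} {A : List β → Set α}
    (hA : CantorScheme.Disjoint A) (hanti : CantorScheme.Antitone A) :
    ∀ {l m : List β}, l.length = m.length → l ≠ m → Disjoint (A l) (A m)
  | [], [], _, hne => absurd rfl hne
  | b :: l, b' :: m, hlen, hne => by
    by_cases hlm : l = m
    · subst hlm
      exact hA l fun hbb' => hne (hbb' ▸ rfl)
    · exact (hA.disjoint_of_length_eq_s10 hanti (Nat.succ_injective hlen) hlm).mono
        (hanti l b) (hanti m b')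

theorem CantorScheme.Antitone.nonempty_iInter_res [CompactSpace X] {β : Type*}
    {A : List β → Set X} (hanti : CantorScheme.Antitone A) (hclosed : ∀ l, IsClosed (A l))
    (hne : ∀ l, (A l).Nonempty) (x : ℕ → β) : (⋂ n, A (res x n)).Nonempty :=
  IsCompact.nonempty_iInter_of_sequence_nonempty_isCompact_isClosed _
    (fun n => res_succ x n ▸ hanti _ _) (fun _ => hne _) (hclosed _).isCompact fun _ => hclosed _

theorem CantorScheme.Disjoint.exists_continuous_eq_cond [NormalSpace X] {A : List Bool → Set X}
    (hA : CantorScheme.Disjoint A) (hanti : CantorScheme.Antitone A)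
    (hclosed : ∀ l, IsClosed (A l)) (n : ℕ) :
    ∃ g : C(X, ℝ), (∀ x, g x ∈ Icc (0 : ℝ) 1) ∧
      ∀ b l, l.length = n → ∀ x ∈ A (b :: l), g x = cond b 1 0 := by
  let level (b : Bool) : Set X := ⋃ l ∈ {l : List Bool | l.length = n}, A (b :: l)
  have hclosed_level (b : Bool) : IsClosed (level b) :=
    (List.finite_length_eq Bool n).isClosed_biUnion fun _ _ => hclosed _
  have hdisj_level : Disjoint (level false) (level true) := by
    simp only [level, disjoint_iUnion_left, disjoint_iUnion_right]
    intro l hl m hm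
    exact hA.disjoint_of_length_eq_s10 hanti (by simp_all) (by simp)
  obtain ⟨g, hg₀, hg₁, hg⟩ :=
    exists_continuous_zero_one_of_isClosed (hclosed_level false) (hclosed_level true) hdisj_level
  refine ⟨g, hg, fun b l hl x hx => ?_⟩
  cases b
  · exact hg₀ (mem_biUnion (x := l) hl hx)
  · exact hg₁ (mem_biUnion (x := l) hl hx)

theorem not_countable_range_cantorFunction {c : ℝ} (h0 : 0 < c) (h1 : c < 1 / 2) :
    ¬ (range (Cardinal.cantorFunction c)).Countable := fun h => by
  have : Countable (ℕ → Bool) :=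
    countable_univ_iff.mp (by simpa using h.preimage (Cardinal.cantorFunction_injective h0 h1))
  rw [← Cardinal.mk_le_aleph0_iff] at this
  exact this.not_gt (by simpa using Cardinal.cantor Cardinal.aleph0)

theorem Perfect.exists_continuous_not_countable_range [CompactSpace X] [T2Space X] {K : Set X}
    (hK : Perfect K) (hne : K.Nonempty) : ∃ F : X → ℝ, Continuous F ∧ ¬ (range F).Countable := by
  obtain ⟨A, hA, hanti, hdisj⟩ := hK.exists_cantorScheme_s10 hne
  choose φ hφ using hanti.nonempty_iInter_res (fun l => (hA l).1.closed) (fun l => (hA l).2)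
  choose g hg01 hg using hdisj.exists_continuous_eq_cond hanti fun l => (hA l).1.closed
  have hgφ (a : ℕ → Bool) (n : ℕ) : g n (φ a) = cond (a n) 1 0 :=
    hg n _ _ (res_length a n) _ (res_succ a n ▸ mem_iInter.mp (hφ a) (n + 1))
  let F (x : X) : ℝ := ∑' n, (3⁻¹ : ℝ) ^ n * g n x
  have hF : Continuous F := by
    refine continuous_tsum (fun n => by fun_prop)
      (summable_geometric_of_lt_one (r := (3⁻¹ : ℝ)) (by norm_num) (by norm_num)) fun n x => ?_
    rw [norm_mul, norm_pow, Real.norm_of_nonneg (by norm_num : (0 : ℝ) ≤ 3⁻¹)]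
    exact mul_le_of_le_one_right (by positivity)
      (by rw [Real.norm_of_nonneg (hg01 n x).1]; exact (hg01 n x).2)
  have hFφ : F ∘ φ = Cardinal.cantorFunction 3⁻¹ := by
    funext a
    refine tsum_congr fun n => ?_
    rw [hgφ, Cardinal.cantorFunctionAux]
    cases a n <;> simp
  refine ⟨F, hF, fun h => not_countable_range_cantorFunction (c := 3⁻¹) (by norm_num)
    (by norm_num) (h.mono ?_)⟩
  rw [← hFφ]
  exact range_comp_subset_range φ F

end

theorem stmt_10 (Ω : Type*) [TopologicalSpace Ω] [CompactSpace Ω] [T2Space Ω] :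
    IsScatteredSpace Ω ↔
      ∀ f : C(Ω, ℂ), IsSelfAdjoint f → (spectrum ℂ f).Countable := by
  constructor
  · intro hΩ f _
    rw [ContinuousMap.spectrum_eq_range]
    exact hΩ.countable_range f.continuous
  · intro h
    rw [isScatteredSpace_iff_not_exists_perfect_nonempty]
    rintro ⟨K, hK, hne⟩
    obtain ⟨F, hF, hunc⟩ := hK.exists_continuous_not_countable_range hne
    let f : C(Ω, ℂ) := ⟨fun x => F x, by fun_prop⟩
    have hf : IsSelfAdjoint f := by
      ext x
      simp [f]
    have hcount := h f hf
    rw [ContinuousMap.spectrum_eq_range] at hcount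
    exact hunc ((hcount.preimage Complex.ofReal_injective).mono
      (by rintro _ ⟨x, rfl⟩; exact ⟨x, rfl⟩))
end
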